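/- arXiv:2112.06333 — 2 statements merged into one kernel-verified Lean document; each statement's English description precedes it below -/
import Mathlib

section
/- Every d-degenerate graph G with a conflict function f into a color set C of size at least 2d+1 has a single-conflict coloring: there is a vertex coloring φ: V(G) → C such that no edge (u,v) satisfies f(u,v) = (φ(u), φ(v)). In particular the single-conflict chromatic number of a d-degenerate graph is at most 2d+1. -/
theorem stmt_2 {V C : Type*} [Fintype V] [Fintype C] [DecidableEq V] (d : ℕ)
    (F : V → V → Finset (C × C))
    (hloop : ∀ v, F v v = ∅)
    (hsymm : ∀ u v p, p ∈ F u v ↔ p.swap ∈ F v u)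
    (hdeg : ∀ s : Finset V, s.Nonempty → ∃ v ∈ s, ∑ w ∈ s, (F v w).card ≤ d)
    (hC : 2 * d + 1 ≤ Fintype.card C) :
    ∃ φ : V → C, ∀ u v, (φ u, φ v) ∉ F u v := by
  classical
  have hCpos : 0 < Fintype.card C := by omega
  have hCne : Nonempty C := Fintype.card_pos_iff.mp hCpos
  suffices h : ∀ s : Finset V, ∃ φ : V → C, ∀ u ∈ s, ∀ w ∈ s, (φ u, φ w) ∉ F u w by
    obtain ⟨φ, hφ⟩ := h Finset.univ
    exact ⟨φ, fun u v => hφ u (Finset.mem_univ u) v (Finset.mem_univ v)⟩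
  intro s
  induction s using Finset.strongInduction with
  | _ s ih =>
    rcases s.eq_empty_or_nonempty with rfl | hne
    · exact ⟨fun _ => Classical.arbitrary C, by simp⟩
    · obtain ⟨v, hv, hdv⟩ := hdeg s hne
      obtain ⟨φ, hφ⟩ := ih (s.erase v) (Finset.erase_ssubset hv)
      set B : Finset C :=
        (s.erase v).biUnion
          (fun w => ((F v w).filter (fun p => p.2 = φ w)).image Prod.fst) with hB
      have hBcard : B.card ≤ d := by
        calc B.card ≤ ∑ w ∈ s.erase v,
              (((F v w).filter (fun p => p.2 = φ w)).image Prod.fst).card :=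
            Finset.card_biUnion_le
          _ ≤ ∑ w ∈ s.erase v, (F v w).card := by
            refine Finset.sum_le_sum fun w _ => ?_
            exact le_trans Finset.card_image_le (Finset.card_filter_le _ _)
          _ ≤ ∑ w ∈ s, (F v w).card :=
            Finset.sum_le_sum_of_subset (Finset.erase_subset _ _)
          _ ≤ d := hdv
      have hex : ∃ c, c ∉ B := by
        by_contra hall
        push_neg at hall
        have : Finset.univ ⊆ B := fun c _ => hall c
        have := Finset.card_le_card this
        simp [Finset.card_univ] at this
        omega
      obtain ⟨c, hc⟩ := hex
      have key : ∀ w ∈ s.erase v, (c, φ w) ∉ F v w := by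
        intro w hw hmem
        apply hc
        rw [hB]
        refine Finset.mem_biUnion.mpr ⟨w, hw, ?_⟩
        exact Finset.mem_image.mpr ⟨(c, φ w), Finset.mem_filter.mpr ⟨hmem, rfl⟩, rfl⟩
      refine ⟨Function.update φ v c, ?_⟩
      intro u hu w hw
      by_cases hu' : u = v <;> by_cases hw' : w = v
      · subst hu'; subst hw'; simp [hloop]
      · subst hu'
        rw [Function.update_self, Function.update_of_ne hw']
        exact key w (Finset.mem_erase.mpr ⟨hw', hw⟩)
      · subst hw'
        rw [Function.update_of_ne hu', Function.update_self]
        intro hmem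
        exact key u (Finset.mem_erase.mpr ⟨hu', hu⟩) ((hsymm u _ _).mp hmem)
      · rw [Function.update_of_ne hu', Function.update_of_ne hw']
        exact hφ u (Finset.mem_erase.mpr ⟨hu', hu⟩) w (Finset.mem_erase.mpr ⟨hw', hw⟩)
end

section
/- Let b: {1,...,k} → ℝ_{≥0}, and for subsets S ⊆ {1,...,k} let b(S) be nonnegative reals satisfying: for every j and every z, the sum of b(S) over all sets S of cardinality q containing j with minimum element j is at most 2^r · b(j) (the base restrictiveness bound). Then for any positive integers q_1,...,q_z, the sum of b(C_1)b(C_2)···b(C_z) over all tuples of pairwise disjoint sets C_1,...,C_z ⊆ {1,...,k} with |C_i| = q_i, listed in lexicographic order, is at most 2^{zr} times the sum over all 1 ≤ i_1 < i_2 < ... < i_z ≤ k of b(i_1)b(i_2)···b(i_z). -/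
open scoped Classical in
theorem stmt_12 (k r : ℕ) (B : Finset (Fin k) → ℝ)
    (hnn : ∀ S, 0 ≤ B S)
    (hbase : ∀ j : Fin k, ∀ q : ℕ,
      ∑ S ∈ Finset.univ.powerset.filter
          (fun S : Finset (Fin k) => S.card = q ∧ j ∈ S ∧ ∀ i ∈ S, j ≤ i), B S
        ≤ 2 ^ r * B {j})
    (z : ℕ) (q : Fin z → ℕ) (hq : ∀ i, 1 ≤ q i) :
    ∑ Cfam ∈ Finset.univ.filter (fun Cfam : Fin z → Finset (Fin k) =>
        (∀ i, (Cfam i).card = q i) ∧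
        (∀ i j, i ≠ j → Disjoint (Cfam i) (Cfam j)) ∧
        (∀ i j : Fin z, i < j → (Cfam i).min < (Cfam j).min)),
      ∏ i, B (Cfam i)
      ≤ 2 ^ (z * r) *
        ∑ S ∈ Finset.univ.powerset.filter (fun S : Finset (Fin k) => S.card = z),
          ∏ i ∈ S, B {i} := by
  classical
  set T := Finset.univ.filter (fun Cfam : Fin z → Finset (Fin k) =>
        (∀ i, (Cfam i).card = q i) ∧
        (∀ i j, i ≠ j → Disjoint (Cfam i) (Cfam j)) ∧
        (∀ i j : Fin z, i < j → (Cfam i).min < (Cfam j).min)) with hT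
  set Sset := Finset.univ.powerset.filter (fun S : Finset (Fin k) => S.card = z) with hSset
  rcases Nat.eq_zero_or_pos k with hk | hk
  · -- k = 0
    subst hk
    rcases Nat.eq_zero_or_pos z with hz | hz
    · subst hz
      have h1 : T = Finset.univ := by
        apply Finset.eq_univ_of_forall
        intro C
        simp only [hT, Finset.mem_filter, Finset.mem_univ, true_and]
        exact ⟨fun i => i.elim0, fun i => i.elim0, fun i => i.elim0⟩
      have h2 : Sset = {∅} := by
        apply Finset.eq_singleton_iff_unique_mem.2
        constructor
        · simp [hSset]
        · intro S hS
          simp only [hSset, Finset.mem_filter] at hS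
          exact Finset.card_eq_zero.mp hS.2
      rw [h1, h2]
      simp
    · have h1 : T = ∅ := by
        apply Finset.eq_empty_of_forall_notMem
        intro C hC
        simp only [hT, Finset.mem_filter] at hC
        have h := hC.2.1 ⟨0, hz⟩
        have : C ⟨0, hz⟩ = ∅ := Finset.eq_empty_of_forall_notMem (fun x _ => x.elim0)
        rw [this, Finset.card_empty] at h
        have := hq ⟨0, hz⟩
        omega
      rw [h1]
      simp only [Finset.sum_empty]
      exact mul_nonneg (by positivity)
        (Finset.sum_nonneg fun S _ => Finset.prod_nonneg fun x _ => hnn _)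
  · -- main case k > 0
    have j0 : Fin k := ⟨0, hk⟩
    -- the minimum function
    set m : (Fin z → Finset (Fin k)) → Fin z → Fin k :=
      fun C i => if h : (C i).Nonempty then (C i).min' h else j0 with hm
    -- facts about members of T
    have hne : ∀ C ∈ T, ∀ i, (C i).Nonempty := by
      intro C hC i
      simp only [hT, Finset.mem_filter] at hC
      rw [← Finset.card_pos, hC.2.1 i]
      exact hq i
    have hmin : ∀ C ∈ T, ∀ i, (C i).min = (m C i : WithTop (Fin k)) := by
      intro C hC i
      simp only [hm, dif_pos (hne C hC i)]
      exact (Finset.coe_min' (hne C hC i)).symm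
    have hsm : ∀ C ∈ T, StrictMono (m C) := by
      intro C hC i j hij
      have hC' := hC
      simp only [hT, Finset.mem_filter] at hC'
      have h := hC'.2.2.2 i j hij
      rw [hmin C hC i, hmin C hC j] at h
      exact_mod_cast h
    have hmaps : ∀ C ∈ T, Finset.image (m C) Finset.univ ∈ Sset := by
      intro C hC
      simp only [hSset, Finset.mem_filter, Finset.mem_powerset]
      refine ⟨Finset.subset_univ _, ?_⟩
      rw [Finset.card_image_of_injective _ (hsm C hC).injective, Finset.card_univ,
        Fintype.card_fin]
    rw [← Finset.sum_fiberwise_of_maps_to hmaps (fun C => ∏ i, B (C i))]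
    have key : ∀ S ∈ Sset,
        ∑ C ∈ T.filter (fun C => Finset.image (m C) Finset.univ = S), ∏ i, B (C i)
          ≤ 2 ^ (z * r) * ∏ x ∈ S, B {x} := by
      intro S hS
      simp only [hSset, Finset.mem_filter, Finset.mem_powerset] at hS
      have hScard : S.card = z := hS.2
      set e := S.orderEmbOfFin hScard with he
      set A : Fin z → Finset (Finset (Fin k)) := fun i =>
        Finset.univ.powerset.filter
          (fun D : Finset (Fin k) => D.card = q i ∧ e i ∈ D ∧ ∀ x ∈ D, e i ≤ x) with hA
      have hsub : T.filter (fun C => Finset.image (m C) Finset.univ = S)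
          ⊆ Fintype.piFinset A := by
        intro C hC
        rw [Finset.mem_filter] at hC
        obtain ⟨hCT, hCS⟩ := hC
        have hme : m C = e := by
          apply Finset.orderEmbOfFin_unique hScard _ (hsm C hCT)
          intro x
          rw [← hCS]
          exact Finset.mem_image_of_mem _ (Finset.mem_univ x)
        rw [Fintype.mem_piFinset]
        intro i
        simp only [hA, Finset.mem_filter, Finset.mem_powerset]
        have hmem : e i ∈ C i := by
          rw [← hme]
          simp only [hm, dif_pos (hne C hCT i)]
          exact Finset.min'_mem _ _
        refine ⟨Finset.subset_univ _, ?_, hmem, ?_⟩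
        · simp only [hT, Finset.mem_filter] at hCT
          exact hCT.2.1 i
        · intro x hx
          rw [← hme]
          simp only [hm, dif_pos (hne C hCT i)]
          exact Finset.min'_le _ _ hx
      calc ∑ C ∈ T.filter (fun C => Finset.image (m C) Finset.univ = S), ∏ i, B (C i)
          ≤ ∑ C ∈ Fintype.piFinset A, ∏ i, B (C i) := by
            apply Finset.sum_le_sum_of_subset_of_nonneg hsub
            intro C _ _
            exact Finset.prod_nonneg fun i _ => hnn _
        _ = ∏ i, ∑ D ∈ A i, B D := (Finset.prod_univ_sum A (fun _ D => B D)).symm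
        _ ≤ ∏ i, (2 ^ r * B {e i}) := by
            apply Finset.prod_le_prod
            · intro i _
              exact Finset.sum_nonneg fun D _ => hnn D
            · intro i _
              exact hbase (e i) (q i)
        _ = 2 ^ (z * r) * ∏ i, B {e i} := by
            rw [Finset.prod_mul_distrib, Finset.prod_const, Finset.card_univ,
              Fintype.card_fin, ← pow_mul, Nat.mul_comm r z]
        _ = 2 ^ (z * r) * ∏ x ∈ S, B {x} := by
            congr 1
            apply Finset.prod_nbij (fun i => e i)
            · intro i _
              exact Finset.orderEmbOfFin_mem S hScard i
            · intro a _ b _ hab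
              exact e.injective hab
            · intro x hx
              have hx' : x ∈ Set.range e := by
                rw [he, Finset.range_orderEmbOfFin]; exact hx
              obtain ⟨i, hi⟩ := hx'
              exact ⟨i, Finset.mem_coe.mpr (Finset.mem_univ i), hi⟩
            · intro i _
              rfl
    calc ∑ S ∈ Sset, ∑ C ∈ T.filter (fun C => Finset.image (m C) Finset.univ = S),
            ∏ i, B (C i)
        ≤ ∑ S ∈ Sset, 2 ^ (z * r) * ∏ x ∈ S, B {x} := Finset.sum_le_sum key
      _ = 2 ^ (z * r) * ∑ S ∈ Sset, ∏ x ∈ S, B {x} := by rw [Finset.mul_sum]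
end
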